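/- Suppose f : M → M is measurable, λ is a finite measure, and h : M → ℤ⁺ is defined λ-a.e. with ∑_{n≥1} ∑_{j=0}^{n-1} λ(f^j(h⁻¹(n))) < ∞. Define H(x) = sup{ h(z) − l : l ≥ 0, z ∈ M, f^l(z) = x }. Then H(x) < ∞ for λ-almost every x ∈ M. -/
import Mathlib


open MeasureTheory Finset

/-- If `f : M → M` is measurable, `λ` a finite measure, `h : M → ℤ⁺` with
`∑_{n≥1} ∑_{j=0}^{n-1} λ(f^j(h⁻¹(n))) < ∞`, and
`H(x) = sup{ h z − l : l ≥ 0, f^l z = x }`, then `H(x) < ∞` (the defining set is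
bounded above) for `λ`-almost every `x`. -/
theorem stmt2 {M : Type*} [MeasurableSpace M] (lam : Measure M) [IsFiniteMeasure lam]
    (f : M → M) (hf : Measurable f) (h : M → ℕ) (hpos : ∀ x, 1 ≤ h x)
    (hsumm : (∑' n : ℕ, ∑ j ∈ Finset.range n, lam (f^[j] '' (h ⁻¹' {n}))) < ⊤) :
    ∀ᵐ x ∂lam, BddAbove {m : ℕ | ∃ z : M, ∃ l : ℕ, f^[l] z = x ∧ m = h z - l} := by
  set s : ℕ → Set M := fun n => ⋃ j ∈ Finset.range n, f^[j] '' (h ⁻¹' {n}) with hs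
  have hsum : (∑' n, lam (s n)) ≠ ⊤ := by
    refine ne_top_of_le_ne_top hsumm.ne ?_
    exact ENNReal.tsum_le_tsum fun n => measure_biUnion_finset_le _ _
  filter_upwards [MeasureTheory.ae_eventually_notMem hsum] with x hx
  obtain ⟨N, hN⟩ := Filter.eventually_atTop.1 hx
  refine ⟨N, fun m hm => ?_⟩
  obtain ⟨z, l, hzl, rfl⟩ := hm
  by_contra hcon
  push_neg at hcon
  have hl : l < h z := by omega
  have hz : N ≤ h z := by omega
  exact hN (h z) hz (Set.mem_biUnion (Finset.mem_range.2 hl) ⟨z, rfl, hzl⟩)
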